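/- arXiv:math/0608134 — 2 statements merged into one kernel-verified Lean document; each statement's English description precedes it below -/
import Mathlib

section
/- Let n, r ≥ 1, let λ, μ, ν, ρ : Fin n → ℤ satisfy λ + μ = ν + ρ (pointwise), and suppose ν and ρ both lie in the minimal alcoved parallelepiped P_{λ,μ}, i.e. for all indices i, j the differences ν i - ν j and ρ i - ρ j each lie weakly between λ i - λ j and μ i - μ j. Let l, m : Fin r → Fin n be two maps, and let G ∈ ℤ. Suppose that for every function ε : Fin r → Bool, letting (l'_p, m'_p) = (l p, m p) if ε p = false and (l'_p, m'_p) = (m p, l p) if ε p = true, the inequality Σ_{p=1}^{r} (λ (l'_p) + μ (m'_p)) ≥ G holds. Then Σ_{p=1}^{r} (ν (l p) + ρ (m p)) ≥ G. (This is the arithmetic content of Lemma 2.4 of the paper: if the Horn–Klyachko inequality with right-hand side G = Σ_{k ∈ K} γ_k holds for λ, μ for all 2^r triples (I', J', K) obtained by swapping entries of the paired enumerations of I and J, then the Horn–Klyachko inequality for the triple (I, J, K) holds for ν, ρ.) -/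
/-!
Writing `ρ = λ + μ - ν`, each summand `ν (l p) + ρ (m p)` equals
`(ν (l p) - ν (m p)) + λ (m p) + μ (m p)`, which by the alcove condition on `ν` is at least
`min (λ (l p) + μ (m p)) (λ (m p) + μ (l p))`. Choosing for every `p` the swap `ε p` that
realises this minimum, the hypothesis for that `ε` bounds the whole sum from below by `G`.
-/

theorem min_add_le_add_of_min_sub_le {ι α : Type*} [AddCommGroup α] [LinearOrder α]
    [IsOrderedAddMonoid α] {lam mu nu rho : ι → α} (hsum : lam + mu = nu + rho) {i j : ι}
    (hnu : min (lam i - lam j) (mu i - mu j) ≤ nu i - nu j) :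
    min (lam i + mu j) (lam j + mu i) ≤ nu i + rho j :=
  calc min (lam i + mu j) (lam j + mu i)
      = min (lam i - lam j) (mu i - mu j) + (lam j + mu j) := by
        rw [← min_add_add_right]; congr 1 <;> abel
    _ ≤ (nu i - nu j) + (lam j + mu j) := add_le_add_left hnu _
    _ = nu i + rho j := by
        have hj := congrFun hsum j
        simp only [Pi.add_apply] at hj
        rw [hj]; abel

theorem le_sum_of_forall_le_sum_comp_of_exists_le {ι β M : Type*} [Fintype ι]
    [AddCommMonoid M] [PartialOrder M] [IsOrderedAddMonoid M] {f : ι → β → M} {g : ι → M}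
    {G : M} (h : ∀ ε : ι → β, G ≤ ∑ p, f p (ε p)) (hg : ∀ p, ∃ b, f p b ≤ g p) :
    G ≤ ∑ p, g p := by
  choose ε hε using hg
  exact (h ε).trans (Finset.sum_le_sum fun p _ => hε p)

theorem stmt_4_general (n r : ℕ) (lam mu nu rho : Fin n → ℤ)
    (hsum : lam + mu = nu + rho)
    (hnu : ∀ i j : Fin n, min (lam i - lam j) (mu i - mu j) ≤ nu i - nu j ∧
      nu i - nu j ≤ max (lam i - lam j) (mu i - mu j))
    (l m : Fin r → Fin n) (G : ℤ)
    (hHK : ∀ ε : Fin r → Bool,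
      G ≤ ∑ p : Fin r,
        (lam (if ε p then m p else l p) + mu (if ε p then l p else m p))) :
    G ≤ ∑ p : Fin r, (nu (l p) + rho (m p)) := by
  refine le_sum_of_forall_le_sum_comp_of_exists_le
    (f := fun p (b : Bool) => lam (if b then m p else l p) + mu (if b then l p else m p)) hHK fun p => ?_
  rcases min_le_iff.mp (min_add_le_add_of_min_sub_le hsum (hnu (l p) (m p)).1) with h | h
  · exact ⟨false, by simpa using h⟩
  · exact ⟨true, by simpa [add_comm] using h⟩

theorem stmt_4 (n r : ℕ) (hn : 1 ≤ n) (hr : 1 ≤ r) (lam mu nu rho : Fin n → ℤ)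
    (hsum : lam + mu = nu + rho)
    (hnu : ∀ i j : Fin n, min (lam i - lam j) (mu i - mu j) ≤ nu i - nu j ∧
      nu i - nu j ≤ max (lam i - lam j) (mu i - mu j))
    (hrho : ∀ i j : Fin n, min (lam i - lam j) (mu i - mu j) ≤ rho i - rho j ∧
      rho i - rho j ≤ max (lam i - lam j) (mu i - mu j))
    (l m : Fin r → Fin n) (G : ℤ)
    (hHK : ∀ ε : Fin r → Bool,
      G ≤ ∑ p : Fin r,
        (lam (if ε p then m p else l p) + mu (if ε p then l p else m p))) :
    G ≤ ∑ p : Fin r, (nu (l p) + rho (m p)) :=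
  stmt_4_general n r lam mu nu rho hsum hnu l m G hHK
end

section
/- Let n, r ≥ 1 and let λ, μ, ν, ρ : Fin n → ℤ satisfy λ + μ = ν + ρ (pointwise), with ν and ρ both lying in the minimal alcoved parallelepiped P_{λ,μ}, i.e. for all indices i, j the differences ν i - ν j and ρ i - ρ j each lie weakly between λ i - λ j and μ i - μ j. Let T be a set of pairs (l, m) of maps Fin r → Fin n which is swap-closed in the following sense: for every (l, m) ∈ T and every ε : Fin r → Bool, the pair (l', m') with (l' p, m' p) = (l p, m p) when ε p = false and (l' p, m' p) = (m p, l p) when ε p = true also belongs to T. Let G ∈ ℤ, and suppose that for every (l, m) ∈ T the inequality Σ_{p=1}^{r} (λ (l p) + μ (m p)) ≥ G holds. Then for every (l, m) ∈ T the inequality Σ_{p=1}^{r} (ν (l p) + ρ (m p)) ≥ G holds. (This combines Lemma 2.4 with the swap-closure property established in Lemma 4.1: any system of Horn–Klyachko-type inequalities closed under the swapping operation and satisfied by λ, μ is also satisfied by ν, ρ.) -/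
theorem stmt_6 (n r : ℕ) (hn : 1 ≤ n) (hr : 1 ≤ r) (lam mu nu rho : Fin n → ℤ)
    (hsum : lam + mu = nu + rho)
    (hnu : ∀ i j : Fin n, min (lam i - lam j) (mu i - mu j) ≤ nu i - nu j ∧
      nu i - nu j ≤ max (lam i - lam j) (mu i - mu j))
    (hrho : ∀ i j : Fin n, min (lam i - lam j) (mu i - mu j) ≤ rho i - rho j ∧
      rho i - rho j ≤ max (lam i - lam j) (mu i - mu j))
    (T : Set ((Fin r → Fin n) × (Fin r → Fin n)))
    (hswap : ∀ lm ∈ T, ∀ ε : Fin r → Bool,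
      ((fun p => if ε p then lm.2 p else lm.1 p),
       (fun p => if ε p then lm.1 p else lm.2 p)) ∈ T)
    (G : ℤ)
    (hHK : ∀ lm ∈ T, G ≤ ∑ p : Fin r, (lam (lm.1 p) + mu (lm.2 p))) :
    ∀ lm ∈ T, G ≤ ∑ p : Fin r, (nu (lm.1 p) + rho (lm.2 p)) := by
  intro lm hlm
  have hpt : ∀ i : Fin n, lam i + mu i = nu i + rho i := fun i => congrFun hsum i
  have key : ∀ i j : Fin n, min (lam i + mu j) (lam j + mu i) ≤ nu i + rho j := by
    intro i j
    have h1 := (hnu i j).1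
    have h2 := hpt j
    omega
  have hmem := hswap lm hlm
    (fun p => decide (lam (lm.2 p) + mu (lm.1 p) < lam (lm.1 p) + mu (lm.2 p)))
  have h := hHK _ hmem
  refine le_trans h (Finset.sum_le_sum fun p _ => ?_)
  have hk := key (lm.1 p) (lm.2 p)
  by_cases hp : lam (lm.2 p) + mu (lm.1 p) < lam (lm.1 p) + mu (lm.2 p) <;>
    simp [hp] <;> omega
end
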